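/- arXiv:2602.05290 — 4 statements merged into one kernel-verified Lean document; each statement's English description precedes it below -/
import Mathlib

section
/- Let G₁ and G₂ be groups with a common subgroup C that is almost malnormal in each Gᵢ (i.e., for every g ∈ Gᵢ \ C, the intersection C ∩ gCg⁻¹ is finite). Then C is almost malnormal in the amalgamated free product G = G₁ ∗_C G₂. -/
/-!
Write `g ∉ C` as `h * w` with `h ∈ C` and `w = a * t` a nonempty reduced word whose first letter
`a` lies in `Gᵢ \ C`. If `c` and `g⁻¹ c g = c'` both lie in `C`, then `x = a⁻¹ (h⁻¹ c h) a` lies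
in `C` too: otherwise `x * t` and `t * c'` would be the same element written as reduced words of
lengths `|t| + 1` and `|t|`, while the normal form theorem makes the sequence of factors of a
reduced word, modulo `C` on either side, an invariant of the element. Hence `c ↦ h⁻¹ c h` embeds
`C ∩ g C g⁻¹` into the finite set `C ∩ a C a⁻¹` of `Gᵢ`.
-/

/-- A subgroup `C` of a group `G` is *almost malnormal* if for every `g ∉ C`
the intersection `C ∩ gCg⁻¹` is finite. -/
def IsAlmostMalnormal {G : Type*} [Group G] (C : Subgroup G) : Prop :=
  ∀ g : G, g ∉ C → Set.Finite {x : G | x ∈ C ∧ g⁻¹ * x * g ∈ C}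

namespace Monoid.CoprodI.Word

variable {ι : Type*} {G : ι → Type*} [∀ i, Group (G i)]

def inv (w : Word G) : Word G where
  toList := (w.toList.map fun l => ⟨l.1, l.2⁻¹⟩).reverse
  ne_one l hl := by
    obtain ⟨l, hl', rfl⟩ := List.mem_map.1 (List.mem_reverse.1 hl)
    exact inv_ne_one.2 (w.ne_one l hl')
  chain_ne := List.isChain_reverse.2 <| (List.isChain_map _).2 <|
    w.chain_ne.imp fun _ _ h => Ne.symm h

theorem inv_toList_map_fst (w : Word G) :
    w.inv.toList.map Sigma.fst = (w.toList.map Sigma.fst).reverse := by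
  simp [inv, Function.comp_def]

theorem prod_inv (w : Word G) : w.inv.prod = w.prod⁻¹ := by
  simp [inv, prod, List.prod_inv_reverse, Function.comp_def]

end Monoid.CoprodI.Word

namespace Monoid.PushoutI

open CoprodI

variable {ι : Type*} {G : ι → Type*} [∀ i, Group (G i)] {H : Type*} [Group H]
  {φ : ∀ i, H →* G i}

theorem reduced_cons_iff {i : ι} {a : G i} {w : Word G} (hw : w.fstIdx ≠ some i) (ha : a ≠ 1) :
    Reduced φ (Word.cons a w hw ha) ↔ a ∉ (φ i).range ∧ Reduced φ w := by
  simp [Reduced, Word.cons]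

theorem Reduced.inv {w : Word G} (hw : Reduced φ w) : Reduced φ w.inv := by
  intro l hl
  obtain ⟨l, hl', rfl⟩ := List.mem_map.1 (List.mem_reverse.1 hl)
  simpa using hw l hl'

theorem NormalWord.reduced {d : NormalWord.Transversal φ} (w : NormalWord d) :
    Reduced φ w.toWord := by
  intro ⟨i, g⟩ hg hgφ
  -- `g` and `1` both lie in `(φ i).range ∩ d.set i`, a singleton by the complement property.
  have hcompl := d.compl i
  exact w.ne_one _ hg <| congrArg Subtype.val <|
    (hcompl.equiv_snd_eq_self_of_mem_of_one_mem (one_mem _) (w.normalized i g hg)).symm.trans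
      (hcompl.equiv_snd_eq_one_of_mem_of_one_mem (d.one_mem i) hgφ)

theorem exists_base_mul_reduced_eq (hφ : ∀ i, Function.Injective (φ i)) (g : PushoutI φ) :
    ∃ (h : H) (w : Word G), Reduced φ w ∧ base φ h * ofCoprodI w.prod = g := by
  classical
  obtain ⟨d⟩ := NormalWord.transversal_nonempty φ hφ
  let w := NormalWord.equiv (d := d) g
  exact ⟨w.head, w.toWord, w.reduced, NormalWord.equiv.symm_apply_apply g⟩

theorem Reduced.map_fst_eq_of_base_mul_eq (hφ : ∀ i, Function.Injective (φ i))
    {u v : Word G} (hu : Reduced φ u) (hv : Reduced φ v) {c c' : H}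
    (h : base φ c * ofCoprodI u.prod = base φ c' * ofCoprodI v.prod) :
    u.toList.map Sigma.fst = v.toList.map Sigma.fst := by
  obtain ⟨d⟩ := NormalWord.transversal_nonempty φ hφ
  obtain ⟨u', hu'prod, hu'fst⟩ := hu.exists_normalWord_prod_eq d
  obtain ⟨v', hv'prod, hv'fst⟩ := hv.exists_normalWord_prod_eq d
  have huv : c • u' = c' • v' := NormalWord.prod_injective <| by
    rw [NormalWord.prod_base_smul, NormalWord.prod_base_smul, hu'prod, hv'prod, h]
  rw [← hu'fst, ← hv'fst]
  exact (congrArg (fun w : NormalWord d => w.toList.map Sigma.fst) huv :)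

theorem Reduced.map_fst_eq_of_mul_base_eq (hφ : ∀ i, Function.Injective (φ i))
    {u v : Word G} (hu : Reduced φ u) (hv : Reduced φ v) {c c' : H}
    (h : ofCoprodI u.prod * base φ c = ofCoprodI v.prod * base φ c') :
    u.toList.map Sigma.fst = v.toList.map Sigma.fst := by
  have := hu.inv.map_fst_eq_of_base_mul_eq hφ hv.inv (c := c⁻¹) (c' := c'⁻¹) <| by
    simp only [Word.prod_inv, map_inv, ← mul_inv_rev, h]
  simpa [Word.inv_toList_map_fst] using this

theorem mem_range_of_of_mul_eq_mul_base (hφ : ∀ i, Function.Injective (φ i))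
    {t : Word G} (ht : Reduced φ t) {i : ι} (hti : t.fstIdx ≠ some i) {x : G i} {c : H}
    (h : of i x * ofCoprodI t.prod = ofCoprodI t.prod * base φ c) : x ∈ (φ i).range := by
  by_contra hx
  have hx1 : x ≠ 1 := fun h1 => hx (h1 ▸ one_mem _)
  have hxt := ((reduced_cons_iff hti hx1).2 ⟨hx, ht⟩).map_fst_eq_of_mul_base_eq hφ ht
    (c := 1) (c' := c) (by rw [Word.prod_cons, map_mul, ofCoprodI_of, map_one, mul_one, h])
  simpa [Word.cons] using congrArg List.length hxt

theorem conj_mem_range_of_base_mul_eq_mul_base (hφ : ∀ i, Function.Injective (φ i))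
    {i : ι} {a : G i} {t : Word G} (ht : Reduced φ t) (hti : t.fstIdx ≠ some i) (ha : a ≠ 1)
    {c c' : H} (h : base φ c * ofCoprodI (Word.cons a t hti ha).prod =
      ofCoprodI (Word.cons a t hti ha).prod * base φ c') :
    a⁻¹ * φ i c * a ∈ (φ i).range := by
  refine mem_range_of_of_mul_eq_mul_base hφ ht hti (c := c') ?_
  rw [Word.prod_cons, map_mul, ofCoprodI_of, ← of_apply_eq_base φ i] at h
  rw [map_mul, map_mul, map_inv, mul_assoc, mul_assoc, h]
  group

end Monoid.PushoutI

open Monoid Monoid.PushoutI CoprodI in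
/-- If `C` embeds as an almost malnormal subgroup of both `G₁` and `G₂`, then the image of `C`
in the amalgamated free product `G₁ ∗_C G₂` is almost malnormal. -/
theorem almostMalnormal_amalgamated {C : Type*} [Group C] {G : Fin 2 → Type*}
    [∀ i, Group (G i)] (φ : ∀ i, C →* G i) (hinj : ∀ i, Function.Injective (φ i))
    (hmal : ∀ i, IsAlmostMalnormal (φ i).range) :
    IsAlmostMalnormal (Monoid.PushoutI.base φ).range := by
  intro g hg
  obtain ⟨h, w, hw, rfl⟩ := exists_base_mul_reduced_eq hinj g
  induction w using Word.consRecOn with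
  | empty => exact absurd ⟨h, by simp⟩ hg
  | cons i a t hti ha1 _ =>
    obtain ⟨ha, ht⟩ := (reduced_cons_iff hti ha1).1 hw
    have hconj : Function.Injective fun c => φ i (h⁻¹ * c * h) :=
      (hinj i).comp ((mul_left_injective h).comp (mul_right_injective h⁻¹))
    refine (((hmal i a ha).preimage hconj.injOn).image (base φ)).subset ?_
    rintro _ ⟨⟨c, rfl⟩, c', hc'⟩
    refine ⟨c, ⟨⟨_, rfl⟩, ?_⟩, rfl⟩
    refine conj_mem_range_of_base_mul_eq_mul_base hinj ht hti ha1 (c' := c') ?_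
    rw [hc']
    simp only [map_mul, map_inv]
    group
end

section
/- Let G be a group, K ≤ G a subgroup, and δ₁ : K → G a homomorphism such that for every finite-index subgroup K₀ ≤ K the centralizer C_G(δ₁(K₀)) is trivial. Let F ⊆ G be a nonempty finite subset satisfying δ₁(k)⁻¹ F⁻¹F δ₁(k) = F⁻¹F for every k ∈ K. Then F consists of a single element. -/
open Pointwise

/-!
Every `g ∈ F⁻¹F` has only finitely many conjugates under `δ₁(K)`, so the preimage in `K` of its
centralizer is a finite-index subgroup `K₀` with `g ∈ C_G(δ₁(K₀)) = 1`. Thus `F⁻¹F = {1}`.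
-/

namespace MulAction

theorem finiteIndex_stabilizer_of_finite_orbit {H X : Type*} [Group H] [MulAction H X] {x : X}
    (h : (orbit H x).Finite) : (stabilizer H x).FiniteIndex :=
  have := h.to_subtype
  have := Finite.of_equiv _ (orbitEquivQuotientStabilizer H x)
  Subgroup.finiteIndex_of_finite_quotient

end MulAction

namespace Subgroup

variable {H G : Type*} [Group H] [Group G]

theorem finiteIndex_comap_centralizer_of_finite_conj (φ : H →* G) {g : G}
    (hg : (Set.range fun h => φ h * g * (φ h)⁻¹).Finite) :
    ((centralizer {g}).comap φ).FiniteIndex := by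
  let _ : MulAction H G := MulAction.compHom G (ConjAct.toConjAct.toMonoidHom.comp φ)
  have hsmul (h : H) : h • g = φ h * g * (φ h)⁻¹ := ConjAct.toConjAct_smul (φ h) g
  have horbit : MulAction.orbit H g = Set.range fun h => φ h * g * (φ h)⁻¹ := by
    ext; simp only [MulAction.mem_orbit_iff, hsmul, Set.mem_range]
  have hstab : MulAction.stabilizer H g = (centralizer {g}).comap φ := by
    ext h
    rw [MulAction.mem_stabilizer_iff, hsmul, mem_comap, mem_centralizer_singleton_iff,
      mul_inv_eq_iff_eq_mul]
  exact hstab ▸ MulAction.finiteIndex_stabilizer_of_finite_orbit (horbit ▸ hg)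

theorem eq_one_of_mem_of_conj_mem_finite (φ : H →* G)
    (hcent : ∀ K₀ : Subgroup H, K₀.FiniteIndex → centralizer (φ '' (K₀ : Set H)) = ⊥)
    {S : Set G} (hS : S.Finite) (hconj : ∀ h, ∀ g ∈ S, φ h * g * (φ h)⁻¹ ∈ S)
    {g : G} (hg : g ∈ S) : g = 1 := by
  set K₀ := (centralizer {g}).comap φ
  have hK₀ : K₀.FiniteIndex := finiteIndex_comap_centralizer_of_finite_conj φ <|
    hS.subset (Set.range_subset_iff.2 fun h => hconj h g hg)
  have hmem : g ∈ centralizer (φ '' (K₀ : Set H)) := by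
    rintro _ ⟨k, hk, rfl⟩
    exact mem_centralizer_singleton_iff.1 hk
  rwa [hcent K₀ hK₀, mem_bot] at hmem

end Subgroup

/-- Let `K ≤ G` and `δ₁ : K → G` a homomorphism such that for every finite-index subgroup
`K₀ ≤ K` the centralizer `C_G(δ₁(K₀))` is trivial. If `F ⊆ G` is a nonempty finite subset
with `δ₁(k)⁻¹ F⁻¹F δ₁(k) = F⁻¹F` for every `k ∈ K`, then `F` is a singleton. -/
theorem singleton_of_invariant {G : Type*} [Group G] (K : Subgroup G) (δ₁ : ↥K →* G)
    (hcent : ∀ K₀ : Subgroup ↥K, K₀.FiniteIndex →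
      Subgroup.centralizer (⇑δ₁ '' (K₀ : Set ↥K)) = ⊥)
    (F : Set G) (hne : F.Nonempty) (hfin : F.Finite)
    (hinv : ∀ k : ↥K, (fun x => (δ₁ k)⁻¹ * x * δ₁ k) '' (F⁻¹ * F) = F⁻¹ * F) :
    ∃ g : G, F = {g} := by
  have hconj (k : ↥K) (g : G) (hg : g ∈ F⁻¹ * F) : δ₁ k * g * (δ₁ k)⁻¹ ∈ F⁻¹ * F := by
    have := Set.mem_image_of_mem (fun x => (δ₁ k⁻¹)⁻¹ * x * δ₁ k⁻¹) hg
    rwa [hinv k⁻¹, map_inv, inv_inv] at this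
  obtain ⟨f, hf⟩ := hne
  refine ⟨f, Set.eq_singleton_iff_unique_mem.2 ⟨hf, fun f' hf' => ?_⟩⟩
  have hquot : f⁻¹ * f' = 1 := Subgroup.eq_one_of_mem_of_conj_mem_finite δ₁ hcent
    (hfin.inv.mul hfin) hconj (Set.mul_mem_mul (Set.inv_mem_inv.2 hf) hf')
  exact (eq_of_inv_mul_eq_one hquot).symm
end

section
/- Let G be a group and K ≤ G such that for every finite-index subgroup K₀ ≤ K, the centralizer C_{G×G}(Δ(K₀)) is trivial, where Δ : K → G × G is the diagonal embedding k ↦ (k,k). Suppose δ : G → G×G is a homomorphism and F ⊆ G×G is a finite nonempty set with (k,k)·F·δ(k)⁻¹ = F for all k ∈ K. Then there exists a single element (h,l) ∈ G×G with F = {(h,l)} and δ(k) = (h,l)⁻¹(k,k)(h,l) for all k ∈ K. -/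
/-!
Two points `a, b ∈ F` give an element `a b⁻¹` whose conjugates by the diagonal `Δ(K)` all lie
in the finite set `F F⁻¹`, because `Δ(k) a b⁻¹ Δ(k)⁻¹ = (Δ(k) a δ(k)⁻¹)(Δ(k) b δ(k)⁻¹)⁻¹`.
A finite conjugation orbit means a finite-index subgroup `K₀ ≤ K` whose diagonal centralizes
`a b⁻¹`, so `a b⁻¹ = 1`. Hence `F = {p}`, and `Δ(k) p δ(k)⁻¹ = p` is the conjugation formula.
-/

open Pointwise

lemma Subgroup.finiteIndex_comap_centralizer_of_finite_conj_s13 {H M : Type*} [Group H] [Group M]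
    (φ : H →* M) {x : M} (hx : (Set.range fun h => φ h * x * (φ h)⁻¹).Finite) :
    ((Subgroup.centralizer {x}).comap φ).FiniteIndex := by
  let _ : MulAction H M :=
    MulAction.compHom M ((ConjAct.toConjAct : M ≃* ConjAct M).toMonoidHom.comp φ)
  have hstab : MulAction.stabilizer H x = (Subgroup.centralizer {x}).comap φ := by
    ext h
    show ConjAct.toConjAct (φ h) • x = x ↔ _
    rw [ConjAct.toConjAct_smul, mul_inv_eq_iff_eq_mul, Subgroup.mem_comap,
      Subgroup.mem_centralizer_singleton_iff]
  have horbit : (MulAction.orbit H x).Finite := hx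
  rw [← hstab]
  constructor
  rw [MulAction.index_stabilizer]
  exact (Set.ncard_pos horbit).2 (MulAction.nonempty_orbit x) |>.ne'

lemma eq_one_of_finite_diagonal_conj {G : Type*} [Group G] {K : Subgroup G}
    (hcent : ∀ K₀ : Subgroup ↥K, K₀.FiniteIndex →
      Subgroup.centralizer ((fun k : ↥K => ((k : G), (k : G))) '' (K₀ : Set ↥K)) = ⊥)
    {x : G × G}
    (hx : (Set.range fun k : ↥K => ((k : G), (k : G)) * x * ((k : G), (k : G))⁻¹).Finite) :
    x = 1 := by
  let Δ : ↥K →* G × G := K.subtype.prod K.subtype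
  have hfi := Subgroup.finiteIndex_comap_centralizer_of_finite_conj_s13 Δ hx
  have hmem : x ∈ Subgroup.centralizer ((fun k : ↥K => ((k : G), (k : G))) ''
      ((Subgroup.centralizer {x}).comap Δ : Set ↥K)) := by
    rintro _ ⟨k, hk, rfl⟩
    exact Subgroup.mem_centralizer_singleton_iff.1 hk
  rwa [hcent _ hfi] at hmem

/-- Let `K ≤ G` be such that for every finite-index subgroup `K₀ ≤ K` the centralizer in
`G × G` of the diagonal `Δ(K₀) = {(k,k)}` is trivial. If `δ : G → G × G` is a homomorphism
and `F ⊆ G × G` is a finite nonempty set with `(k,k)·F·δ(k)⁻¹ = F` for all `k ∈ K`, then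
`F = {(h,l)}` for a single element and `δ(k) = (h,l)⁻¹ (k,k) (h,l)` for all `k ∈ K`. -/
theorem diagonal_invariant_singleton {G : Type*} [Group G] (K : Subgroup G)
    (hcent : ∀ K₀ : Subgroup ↥K, K₀.FiniteIndex →
      Subgroup.centralizer ((fun k : ↥K => ((k : G), (k : G))) '' (K₀ : Set ↥K)) = ⊥)
    (δ : G →* G × G) (F : Set (G × G)) (hfin : F.Finite) (hne : F.Nonempty)
    (hinv : ∀ k ∈ K, (fun x => (k, k) * x * (δ k)⁻¹) '' F = F) :
    ∃ h l : G, F = {(h, l)} ∧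
      ∀ k ∈ K, δ k = (h, l)⁻¹ * (k, k) * (h, l) := by
  have hmaps : ∀ k ∈ K, ∀ a ∈ F, (k, k) * a * (δ k)⁻¹ ∈ F := fun k hk a ha =>
    hinv k hk ▸ Set.mem_image_of_mem _ ha
  have hsub : F.Subsingleton := by
    intro a ha b hb
    rw [← div_eq_one]
    refine eq_one_of_finite_diagonal_conj hcent ((hfin.div hfin).subset ?_)
    rintro _ ⟨k, rfl⟩
    convert Set.div_mem_div (hmaps k k.2 a ha) (hmaps k k.2 b hb) using 1
    simp only [div_eq_mul_inv, mul_inv_rev, inv_inv, mul_assoc, inv_mul_cancel_left]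
  obtain ⟨⟨h, l⟩, rfl⟩ := Set.exists_eq_singleton_iff_nonempty_subsingleton.2 ⟨hne, hsub⟩
  refine ⟨h, l, rfl, fun k hk => ?_⟩
  have hfix : (k, k) * (h, l) = (h, l) * δ k := mul_inv_eq_iff_eq_mul.1 (hmaps k hk _ rfl)
  rw [mul_assoc, hfix, inv_mul_cancel_left]
end

section
/- Let C be an icc group that is malnormal in a group G. Then the virtual centralizer of C in G is trivial: vC_G(C) = {1}. -/
/-!
If `[C : C_C(g)] < ∞` with `C` infinite, then `g` commutes with some nontrivial `x ∈ C`, so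
`g⁻¹ x g = x ∈ C` and malnormality forces `g ∈ C`. Inside `C`, the index of the centralizer of `g`
is the size of its conjugacy class (orbit–stabilizer), which is infinite unless `g = 1`.
-/

namespace Subgroup

variable {G : Type*} [Group G]

def IsMalnormal (C : Subgroup G) : Prop :=
  ∀ g : G, g ∉ C → ∀ x : G, x ∈ C → g⁻¹ * x * g ∈ C → x = 1

theorem IsMalnormal.mem_of_commute {C : Subgroup G} (hC : C.IsMalnormal) {g x : G}
    (hx : x ∈ C) (hx1 : x ≠ 1) (hgx : Commute g x) : g ∈ C := by
  by_contra hg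
  refine hx1 (hC g hg x hx ?_)
  rwa [mul_assoc, ← hgx.eq, inv_mul_cancel_left]

theorem exists_ne_one_mem_inf_of_relIndex_ne_zero {H K : Subgroup G} [Infinite K]
    (h : H.relIndex K ≠ 0) : ∃ x ∈ H ⊓ K, x ≠ 1 := by
  by_contra! hbot
  rw [← inf_relIndex_right, (eq_bot_iff_forall _).mpr hbot, relIndex_bot_left,
    Nat.card_eq_zero_of_infinite] at h
  exact h rfl

theorem index_centralizer_eq_ncard_conjugatesOf (g : G) :
    (centralizer {g}).index = (conjugatesOf g).ncard := by
  have hstab : centralizer {g} = (MulAction.stabilizer (ConjAct G) g).comap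
      (ConjAct.toConjAct : G ≃* ConjAct G).toMonoidHom := by
    ext h
    simp only [mem_centralizer_singleton_iff, mem_comap, MulAction.mem_stabilizer_iff,
      MulEquiv.coe_toMonoidHom, ConjAct.toConjAct_smul, mul_inv_eq_iff_eq_mul]
  rw [hstab, index_comap_of_surjective _ ConjAct.toConjAct.surjective, MulAction.index_stabilizer]
  congr 1
  ext h
  exact ConjAct.mem_orbit_conjAct.trans isConj_comm

theorem relIndex_centralizer_of_mem {C : Subgroup G} {g : G} (hg : g ∈ C) :
    (centralizer {g}).relIndex C = (centralizer {(⟨g, hg⟩ : C)}).index := by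
  rw [relIndex]
  congr 1
  ext x
  simp [mem_subgroupOf, mem_centralizer_singleton_iff, Subtype.ext_iff]

end Subgroup

def Group.IsICC (H : Type*) [Group H] : Prop :=
  ∀ c : H, c ≠ 1 → (conjugatesOf c).Infinite

theorem Group.IsICC.infinite {H : Type*} [Group H] [Nontrivial H] (hH : Group.IsICC H) :
    Infinite H := by
  obtain ⟨c, hc⟩ := exists_ne (1 : H)
  exact Set.infinite_univ_iff.mp ((hH c hc).mono (Set.subset_univ _))

theorem Group.IsICC.index_centralizer_eq_zero {H : Type*} [Group H] (hH : Group.IsICC H)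
    {c : H} (hc : c ≠ 1) : (Subgroup.centralizer {c}).index = 0 := by
  rw [Subgroup.index_centralizer_eq_ncard_conjugatesOf]
  exact (hH c hc).ncard

/-- Let `C` be an icc group (nontrivial, with every nontrivial conjugacy class infinite)
that is malnormal in `G`. Then the virtual centralizer of `C` in `G` is trivial: every
`g ∈ G` with `[C : C_C(g)] < ∞` satisfies `g = 1`. -/
theorem virtual_centralizer_trivial {G : Type*} [Group G] (C : Subgroup G)
    [Nontrivial ↥C]
    (hicc : ∀ c : ↥C, c ≠ 1 → (conjugatesOf c).Infinite)
    (hmal : ∀ g : G, g ∉ C → ∀ x : G, x ∈ C → g⁻¹ * x * g ∈ C → x = 1) :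
    ∀ g : G, (Subgroup.centralizer {g}).relIndex C ≠ 0 → g = 1 := by
  intro g hg
  have : Infinite C := Group.IsICC.infinite hicc
  obtain ⟨x, ⟨hxg, hxC⟩, hx1⟩ := Subgroup.exists_ne_one_mem_inf_of_relIndex_ne_zero hg
  have hgC : g ∈ C := Subgroup.IsMalnormal.mem_of_commute hmal hxC hx1
    (Subgroup.mem_centralizer_singleton_iff.mp hxg).symm
  by_contra hg1
  rw [Subgroup.relIndex_centralizer_of_mem hgC] at hg
  exact hg (Group.IsICC.index_centralizer_eq_zero hicc (Subtype.coe_ne_coe.mp hg1))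
end
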